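/- Let ψ be a C² function of (t,r) with r > 0 satisfying ψ_tt - e^{-ψ}(ψ_rr + (1/r)ψ_r) + ψ_t² = 0. Define v = ψ_t, w = ψ_r, μ = v + e^{-ψ/2}w, ν = v - e^{-ψ/2}w, χ = e^{-ψ/2}. Then μ satisfies μ_t - χ μ_r = -((μ+ν)/2)² + (1/2)(χ/r - ν/2)(μ - ν). -/

import Mathlib

/-!
Since `μ = v + χ w` with `χ = e^{-ψ/2}`, the chain rule gives `μ_t = v_t + χ (w_t - v w / 2)` and
`μ_r = v_r + χ (w_r - w² / 2)`. The mixed partials `w_t = v_r` agree because `ψ` is `C²`, so they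
cancel in `μ_t - χ μ_r`; substituting `v_t` from the flow equation, where `e^{-ψ} = χ²`, leaves a
polynomial identity in `v`, `w`, `χ` and `1 / r`.
-/

noncomputable def partialT (f : ℝ → ℝ → ℝ) (t r : ℝ) : ℝ :=
  deriv (fun s => f s r) t

noncomputable def partialR (f : ℝ → ℝ → ℝ) (t r : ℝ) : ℝ :=
  deriv (fun ρ => f t ρ) r

open Function Real

section SliceDerivatives

variable {E : Type*} [NormedAddCommGroup E] [NormedSpace ℝ E] {F : ℝ × ℝ → E} {t r : ℝ}

theorem DifferentiableAt.hasDerivAt_comp_prodMk_left (hF : DifferentiableAt ℝ F (t, r)) :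
    HasDerivAt (fun s => F (s, r)) (fderiv ℝ F (t, r) (1, 0)) t :=
  hF.hasFDerivAt.comp_hasDerivAt t ((hasDerivAt_id t).prodMk (hasDerivAt_const t r))

theorem DifferentiableAt.hasDerivAt_comp_prodMk_right (hF : DifferentiableAt ℝ F (t, r)) :
    HasDerivAt (fun ρ => F (t, ρ)) (fderiv ℝ F (t, r) (0, 1)) r :=
  hF.hasFDerivAt.comp_hasDerivAt r ((hasDerivAt_const r t).prodMk (hasDerivAt_id r))

end SliceDerivatives

section PartialDerivatives

variable {f : ℝ → ℝ → ℝ} {t r : ℝ}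

theorem partialT_eq_fderiv (hf : DifferentiableAt ℝ (uncurry f) (t, r)) :
    partialT f t r = fderiv ℝ (uncurry f) (t, r) (1, 0) :=
  hf.hasDerivAt_comp_prodMk_left.deriv

theorem partialR_eq_fderiv (hf : DifferentiableAt ℝ (uncurry f) (t, r)) :
    partialR f t r = fderiv ℝ (uncurry f) (t, r) (0, 1) :=
  hf.hasDerivAt_comp_prodMk_right.deriv

theorem hasDerivAt_partialT (hf : DifferentiableAt ℝ (uncurry f) (t, r)) :
    HasDerivAt (fun s => f s r) (partialT f t r) t :=
  partialT_eq_fderiv hf ▸ hf.hasDerivAt_comp_prodMk_left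

theorem hasDerivAt_partialR (hf : DifferentiableAt ℝ (uncurry f) (t, r)) :
    HasDerivAt (fun ρ => f t ρ) (partialR f t r) r :=
  partialR_eq_fderiv hf ▸ hf.hasDerivAt_comp_prodMk_right

theorem uncurry_partialT_eq_fderiv (hf : Differentiable ℝ (uncurry f)) :
    uncurry (partialT f) = fun p => fderiv ℝ (uncurry f) p (1, 0) :=
  funext fun _ => partialT_eq_fderiv (hf _)

theorem uncurry_partialR_eq_fderiv (hf : Differentiable ℝ (uncurry f)) :
    uncurry (partialR f) = fun p => fderiv ℝ (uncurry f) p (0, 1) :=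
  funext fun _ => partialR_eq_fderiv (hf _)

theorem ContDiff.uncurry_partialT {n : WithTop ℕ∞} (hf : ContDiff ℝ (n + 1) (uncurry f)) :
    ContDiff ℝ n (uncurry (partialT f)) := by
  rw [uncurry_partialT_eq_fderiv (hf.differentiable (by simp))]
  exact (hf.fderiv_right le_rfl).clm_apply contDiff_const

theorem ContDiff.uncurry_partialR {n : WithTop ℕ∞} (hf : ContDiff ℝ (n + 1) (uncurry f)) :
    ContDiff ℝ n (uncurry (partialR f)) := by
  rw [uncurry_partialR_eq_fderiv (hf.differentiable (by simp))]
  exact (hf.fderiv_right le_rfl).clm_apply contDiff_const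

theorem partialT_partialR_comm (hf : ContDiff ℝ 2 (uncurry f)) :
    partialT (partialR f) t r = partialR (partialT f) t r := by
  have hf' : Differentiable ℝ (fderiv ℝ (uncurry f)) :=
    (hf.fderiv_right (m := 1) le_rfl).differentiable one_ne_zero
  rw [partialT_eq_fderiv ((hf.uncurry_partialR (n := 1)).differentiable one_ne_zero _),
    partialR_eq_fderiv ((hf.uncurry_partialT (n := 1)).differentiable one_ne_zero _),
    uncurry_partialR_eq_fderiv (hf.differentiable (by simp)),
    uncurry_partialT_eq_fderiv (hf.differentiable (by simp)),
    fderiv_clm_apply (hf' _) (differentiableAt_const _),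
    fderiv_clm_apply (hf' _) (differentiableAt_const _)]
  simpa using ((hf.contDiffAt (x := (t, r))).isSymmSndFDerivAt (by simp) (1, 0) (0, 1))

end PartialDerivatives

theorem HasDerivAt.add_exp_neg_half_mul {a b g : ℝ → ℝ} {a' b' g' x : ℝ}
    (ha : HasDerivAt a a' x) (hb : HasDerivAt b b' x) (hg : HasDerivAt g g' x) :
    HasDerivAt (fun y => a y + Real.exp (-g y / 2) * b y)
      (a' + Real.exp (-g x / 2) * (b' - g' * b x / 2)) x :=
  (ha.add ((hg.neg.div_const 2).exp.mul hb)).congr_deriv (by simp only [Pi.neg_apply]; ring)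

theorem partialT_add_exp_neg_half_mul {a b g : ℝ → ℝ → ℝ} {t r : ℝ}
    (ha : DifferentiableAt ℝ (uncurry a) (t, r)) (hb : DifferentiableAt ℝ (uncurry b) (t, r))
    (hg : DifferentiableAt ℝ (uncurry g) (t, r)) :
    partialT (fun s ρ => a s ρ + Real.exp (-g s ρ / 2) * b s ρ) t r
      = partialT a t r + Real.exp (-g t r / 2) * (partialT b t r - partialT g t r * b t r / 2) :=
  ((hasDerivAt_partialT ha).add_exp_neg_half_mul (hasDerivAt_partialT hb)
    (hasDerivAt_partialT hg)).deriv

theorem partialR_add_exp_neg_half_mul {a b g : ℝ → ℝ → ℝ} {t r : ℝ}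
    (ha : DifferentiableAt ℝ (uncurry a) (t, r)) (hb : DifferentiableAt ℝ (uncurry b) (t, r))
    (hg : DifferentiableAt ℝ (uncurry g) (t, r)) :
    partialR (fun s ρ => a s ρ + Real.exp (-g s ρ / 2) * b s ρ) t r
      = partialR a t r + Real.exp (-g t r / 2) * (partialR b t r - partialR g t r * b t r / 2) :=
  ((hasDerivAt_partialR ha).add_exp_neg_half_mul (hasDerivAt_partialR hb)
    (hasDerivAt_partialR hg)).deriv

/-- Radial reduced flow: if `ψ` is C² and satisfies
`ψ_tt - e^{-ψ}(ψ_rr + ψ_r/r) + ψ_t² = 0` for `r > 0`, then with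
`μ = ψ_t + e^{-ψ/2}ψ_r`, `ν = ψ_t - e^{-ψ/2}ψ_r`, `χ = e^{-ψ/2}`,
`μ` satisfies `μ_t - χ μ_r = -((μ+ν)/2)² + (1/2)(χ/r - ν/2)(μ-ν)`. -/
theorem stmt14 (ψ : ℝ → ℝ → ℝ) (hψ : ContDiff ℝ 2 (Function.uncurry ψ))
    (heq : ∀ t r : ℝ, 0 < r →
      partialT (partialT ψ) t r
        - Real.exp (-(ψ t r)) * (partialR (partialR ψ) t r + (1 / r) * partialR ψ t r)
        + (partialT ψ t r) ^ 2 = 0)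
    (v w μ ν χ : ℝ → ℝ → ℝ)
    (hv : ∀ t r, v t r = partialT ψ t r)
    (hw : ∀ t r, w t r = partialR ψ t r)
    (hμ : ∀ t r, μ t r = v t r + Real.exp (-(ψ t r) / 2) * w t r)
    (hν : ∀ t r, ν t r = v t r - Real.exp (-(ψ t r) / 2) * w t r)
    (hχ : ∀ t r, χ t r = Real.exp (-(ψ t r) / 2)) :
    ∀ t r : ℝ, 0 < r →
      partialT μ t r - χ t r * partialR μ t r
        = -((μ t r + ν t r) / 2) ^ 2
          + (1 / 2) * (χ t r / r - ν t r / 2) * (μ t r - ν t r) := by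
  intro t r hr
  obtain rfl : μ = fun s ρ => partialT ψ s ρ + exp (-(ψ s ρ) / 2) * partialR ψ s ρ := by
    funext s ρ; rw [hμ, hv, hw]
  have hψ' : Differentiable ℝ (uncurry ψ) := hψ.differentiable (by simp)
  have hψT : Differentiable ℝ (uncurry (partialT ψ)) :=
    (hψ.uncurry_partialT (n := 1)).differentiable one_ne_zero
  have hψR : Differentiable ℝ (uncurry (partialR ψ)) :=
    (hψ.uncurry_partialR (n := 1)).differentiable one_ne_zero
  have hexp : exp (-ψ t r) = exp (-ψ t r / 2) ^ 2 := by
    rw [sq, ← exp_add, add_halves]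
  rw [partialT_add_exp_neg_half_mul (hψT _) (hψR _) (hψ' _),
    partialR_add_exp_neg_half_mul (hψT _) (hψR _) (hψ' _), hν, hχ, hv, hw,
    partialT_partialR_comm hψ]
  have hpde := heq t r hr
  rw [hexp] at hpde
  linear_combination hpde
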